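/- Let L : ℝ^d → ℝ be differentiable with L-Lipschitz gradient, let M ∈ ℝ^{d×d} be positive semi-definite with ‖M − I_d‖_F² ≤ 2(d+s), and for μ > 0 define L_μ(θ) = E_u[L(θ + μu)] and L_{μ,M}(θ) = E_u[L(θ + μMu)] where u ~ N(0,I_d). Then ‖∇L_{μ,M}(θ) − ∇L_μ(θ)‖ ≤ μL√(2(d+s)), and consequently ⟨∇L_μ(θ), ∇L_{μ,M}(θ)⟩ ≥ ‖∇L_μ(θ)‖² − μL√(2(d+s))·‖∇L_μ(θ)‖. -/

import Mathlib

open MeasureTheory ProbabilityTheory Matrix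

/-- The standard Gaussian measure `N(0, I_d)` on `ℝ^d`. -/
noncomputable def stdGaussianPi (d : ℕ) : Measure (Fin d → ℝ) :=
  Measure.pi fun _ => gaussianReal 0 1

/-- The standard Gaussian measure `N(0, I_d)` on Euclidean space. -/
noncomputable def stdGaussianE (d : ℕ) : Measure (EuclideanSpace ℝ (Fin d)) :=
  (stdGaussianPi d).map (MeasurableEquiv.toLp 2 (Fin d → ℝ))

/-- Matrix-vector multiplication on Euclidean space. -/
noncomputable def mulVecE {d : ℕ} (M : Matrix (Fin d) (Fin d) ℝ)
    (u : EuclideanSpace ℝ (Fin d)) : EuclideanSpace ℝ (Fin d) :=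
  (MeasurableEquiv.toLp 2 (Fin d → ℝ))
    (M.mulVec ((MeasurableEquiv.toLp 2 (Fin d → ℝ)).symm u))

/-- Frobenius norm of a real matrix. -/
noncomputable def frobNorm {m n : Type*} [Fintype m] [Fintype n]
    (A : Matrix m n ℝ) : ℝ :=
  Real.sqrt (∑ i, ∑ j, (A i j) ^ 2)

/-!
The difference `D θ = E[L(θ + μMu)] - E[L(θ + μu)]` has derivative `∇L_{μ,M}(θ) - ∇L_μ(θ)`.
For each fixed `u`, the `L`-Lipschitz gradient makes `θ ↦ L(θ + μMu) - L(θ + μu)` Lipschitz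
with constant `μL‖(M - I)u‖`, so `D` is Lipschitz with constant `μL E‖(M - I)u‖`, and that
constant bounds the norm of its derivative. Since `E⟪v, u⟫² = ‖v‖²`, the second moment
`E‖(M - I)u‖²` is `‖M - I‖_F²`, and Jensen gives `E‖(M - I)u‖ ≤ ‖M - I‖_F ≤ √(2(d+s))`.
The inner-product bound follows by Cauchy–Schwarz.
-/

open scoped RealInnerProductSpace

section LipschitzFDeriv

variable {E F : Type*} [NormedAddCommGroup E] [NormedSpace ℝ E] [NormedAddCommGroup F]
  [NormedSpace ℝ F] {f : E → F} {f' : E → E →L[ℝ] F} {L : ℝ}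

theorem norm_sub_sub_sub_le_of_lipschitz_fderiv (hf : ∀ x, HasFDerivAt f (f' x) x)
    (hf' : ∀ x y, ‖f' x - f' y‖ ≤ L * ‖x - y‖) (a b x y : E) :
    ‖f (x + a) - f (x + b) - (f (y + a) - f (y + b))‖ ≤ L * ‖a - b‖ * ‖x - y‖ := by
  have hshift : ∀ c z, HasFDerivAt (fun z => f (z + c)) (f' (z + c)) z := fun c z => by
    simpa [Function.comp_def] using (hf (z + c)).comp z ((hasFDerivAt_id z).add_const c)
  have hderiv : ∀ z ∈ Set.univ, HasFDerivWithinAt (fun z => f (z + a) - f (z + b))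
      (f' (z + a) - f' (z + b)) Set.univ z := fun z _ =>
    ((hshift a z).sub (hshift b z)).hasFDerivWithinAt
  have hbound : ∀ z ∈ Set.univ, ‖f' (z + a) - f' (z + b)‖ ≤ L * ‖a - b‖ := fun z _ => by
    simpa using hf' (z + a) (z + b)
  exact convex_univ.norm_image_sub_le_of_norm_hasFDerivWithin_le hderiv hbound trivial trivial

theorem norm_le_of_lipschitz_fderiv (hL : 0 ≤ L) (hf : ∀ x, HasFDerivAt f (f' x) x)
    (hf' : ∀ x y, ‖f' x - f' y‖ ≤ L * ‖x - y‖) (x : E) :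
    ‖f x‖ ≤ ‖f 0‖ + (‖f' 0‖ + L * ‖x‖) * ‖x‖ := by
  have hbound : ∀ z ∈ Metric.closedBall (0 : E) ‖x‖, ‖f' z‖ ≤ ‖f' 0‖ + L * ‖x‖ := by
    intro z hz
    rw [Metric.mem_closedBall, dist_zero_right] at hz
    calc ‖f' z‖ ≤ ‖f' 0‖ + ‖f' z - f' 0‖ := norm_le_insert' _ _
      _ ≤ ‖f' 0‖ + L * ‖x‖ := by
        gcongr
        simpa using (hf' z 0).trans (by gcongr; simpa using hz)
  have hmvt := (convex_closedBall (0 : E) ‖x‖).norm_image_sub_le_of_norm_hasFDerivWithin_le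
    (fun z _ => (hf z).hasFDerivWithinAt) hbound (Metric.mem_closedBall_self (norm_nonneg x))
    (y := x) (by simp)
  calc ‖f x‖ ≤ ‖f 0‖ + ‖f x - f 0‖ := norm_le_insert' _ _
    _ ≤ ‖f 0‖ + (‖f' 0‖ + L * ‖x‖) * ‖x‖ := by simpa using hmvt

theorem integrable_comp_of_lipschitz_fderiv {Ω : Type*} [MeasurableSpace Ω] {ν : Measure Ω}
    [IsFiniteMeasure ν] {X : Ω → E} (hL : 0 ≤ L) (hf : ∀ x, HasFDerivAt f (f' x) x)
    (hf' : ∀ x y, ‖f' x - f' y‖ ≤ L * ‖x - y‖) (hX : MemLp X 2 ν) :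
    Integrable (fun ω => f (X ω)) ν := by
  have hX1 : Integrable (fun ω => ‖X ω‖) ν := (hX.integrable one_le_two).norm
  have hX2 : Integrable (fun ω => ‖X ω‖ ^ 2) ν := hX.integrable_norm_pow two_ne_zero
  have hcont : Continuous f := continuous_iff_continuousAt.2 fun x => (hf x).continuousAt
  refine Integrable.mono' (((integrable_const ‖f 0‖).add (hX1.const_mul ‖f' 0‖)).add
    (hX2.const_mul L)) (hcont.comp_aestronglyMeasurable hX.aestronglyMeasurable)
    (Filter.Eventually.of_forall fun ω => ?_)
  exact (norm_le_of_lipschitz_fderiv hL hf hf' (X ω)).trans_eq (by simp only [Pi.add_apply]; ring)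

theorem norm_sub_le_of_hasFDerivAt_integral_shift [CompleteSpace F] {Ω : Type*}
    [MeasurableSpace Ω] {ν : Measure Ω} [IsFiniteMeasure ν] {A B : Ω → E} (hL : 0 ≤ L)
    (hf : ∀ x, HasFDerivAt f (f' x) x) (hf' : ∀ x y, ‖f' x - f' y‖ ≤ L * ‖x - y‖)
    (hA : MemLp A 2 ν) (hB : MemLp B 2 ν) {θ : E} {DA DB : E →L[ℝ] F}
    (hDA : HasFDerivAt (fun x => ∫ ω, f (x + A ω) ∂ν) DA θ)
    (hDB : HasFDerivAt (fun x => ∫ ω, f (x + B ω) ∂ν) DB θ) :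
    ‖DA - DB‖ ≤ L * ∫ ω, ‖A ω - B ω‖ ∂ν := by
  have hint : ∀ x {C : Ω → E}, MemLp C 2 ν → Integrable (fun ω => f (x + C ω)) ν :=
    fun x _ hC => integrable_comp_of_lipschitz_fderiv hL hf hf' ((memLp_const x).add hC)
  have hdiff : ∀ x, Integrable (fun ω => f (x + A ω) - f (x + B ω)) ν :=
    fun x => (hint x hA).sub (hint x hB)
  refine (hDA.sub hDB).le_of_lip' (mul_nonneg hL (integral_nonneg fun _ => norm_nonneg _))
    (Filter.Eventually.of_forall fun x => ?_)
  calc ‖(∫ ω, f (x + A ω) ∂ν) - (∫ ω, f (x + B ω) ∂ν)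
        - ((∫ ω, f (θ + A ω) ∂ν) - ∫ ω, f (θ + B ω) ∂ν)‖
      = ‖∫ ω, (f (x + A ω) - f (x + B ω) - (f (θ + A ω) - f (θ + B ω))) ∂ν‖ := by
        rw [integral_sub (hdiff x) (hdiff θ), integral_sub (hint x hA) (hint x hB),
          integral_sub (hint θ hA) (hint θ hB)]
    _ ≤ ∫ ω, L * ‖A ω - B ω‖ * ‖x - θ‖ ∂ν :=
        norm_integral_le_of_norm_le (((hA.sub hB).integrable one_le_two).norm.const_mul L
          |>.mul_const _)
          (Filter.Eventually.of_forall fun ω =>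
            norm_sub_sub_sub_le_of_lipschitz_fderiv hf hf' _ _ _ _)
    _ = L * (∫ ω, ‖A ω - B ω‖ ∂ν) * ‖x - θ‖ := by rw [integral_mul_const, integral_const_mul]

end LipschitzFDeriv

theorem real_inner_ge_norm_sq_sub_of_norm_sub_le {E : Type*} [NormedAddCommGroup E]
    [InnerProductSpace ℝ E] {a b : E} {K : ℝ} (h : ‖b - a‖ ≤ K) :
    ‖a‖ ^ 2 - K * ‖a‖ ≤ ⟪a, b⟫ := by
  have hcs := real_inner_le_norm a (a - b)
  rw [inner_sub_right, real_inner_self_eq_norm_sq, norm_sub_rev] at hcs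
  nlinarith [mul_le_mul_of_nonneg_left h (norm_nonneg a)]

theorem integral_inner_sq_stdGaussian {E : Type*} [NormedAddCommGroup E] [InnerProductSpace ℝ E]
    [FiniteDimensional ℝ E] [MeasurableSpace E] [BorelSpace E] (v : E) :
    ∫ z, ⟪v, z⟫ ^ 2 ∂stdGaussian E = ‖v‖ ^ 2 := by
  have h := covarianceBilin_apply (IsGaussian.memLp_two_id (μ := stdGaussian E)) v v
  rw [covarianceBilin_stdGaussian, innerSL_apply_apply, real_inner_self_eq_norm_sq] at h
  simpa [sq] using h.symm

section StdGaussianE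

variable {d : ℕ}

theorem stdGaussianE_eq : stdGaussianE d = stdGaussian (EuclideanSpace ℝ (Fin d)) :=
  map_pi_eq_stdGaussian

theorem mulVecE_eq_toEuclideanCLM (A : Matrix (Fin d) (Fin d) ℝ) :
    mulVecE A = toEuclideanCLM (𝕜 := ℝ) A :=
  rfl

theorem mulVecE_apply (A : Matrix (Fin d) (Fin d) ℝ) (u : EuclideanSpace ℝ (Fin d)) (i : Fin d) :
    mulVecE A u i = ⟪WithLp.toLp 2 (A i), u⟫ := by
  simp [mulVecE, PiLp.inner_apply, Matrix.mulVec, dotProduct, mul_comm]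

instance isProbabilityMeasure_stdGaussianE : IsProbabilityMeasure (stdGaussianE d) := by
  rw [stdGaussianE_eq]
  infer_instance

theorem memLp_id_stdGaussianE : MemLp id 2 (stdGaussianE d) := by
  rw [stdGaussianE_eq]
  exact IsGaussian.memLp_two_id

theorem memLp_mulVecE (A : Matrix (Fin d) (Fin d) ℝ) : MemLp (mulVecE A) 2 (stdGaussianE d) :=
  memLp_id_stdGaussianE.continuousLinearMap_comp (toEuclideanCLM (𝕜 := ℝ) A)

theorem integral_norm_mulVecE_sq (A : Matrix (Fin d) (Fin d) ℝ) :
    ∫ u, ‖mulVecE A u‖ ^ 2 ∂stdGaussianE d = frobNorm A ^ 2 := by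
  have hint : ∀ v : EuclideanSpace ℝ (Fin d), Integrable (fun u => ⟪v, u⟫ ^ 2) (stdGaussianE d) :=
    fun v => (memLp_id_stdGaussianE.continuousLinearMap_comp (innerSL ℝ v)).integrable_sq
  simp_rw [EuclideanSpace.real_norm_sq_eq, mulVecE_apply]
  rw [integral_finsetSum _ fun i _ => hint _, frobNorm, Real.sq_sqrt (by positivity),
    stdGaussianE_eq]
  simp_rw [integral_inner_sq_stdGaussian, EuclideanSpace.real_norm_sq_eq]

theorem integral_norm_mulVecE_le (A : Matrix (Fin d) (Fin d) ℝ) :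
    ∫ u, ‖mulVecE A u‖ ∂stdGaussianE d ≤ frobNorm A := by
  have hvar := variance_nonneg (fun u => ‖mulVecE A u‖) (stdGaussianE d)
  rw [variance_eq_sub (memLp_mulVecE A).norm] at hvar
  simp only [Pi.pow_apply, integral_norm_mulVecE_sq] at hvar
  exact le_of_sq_le_sq (by linarith) (Real.sqrt_nonneg _)

end StdGaussianE

theorem alignment_smoothed_gradients_general
    (d : ℕ) (s : ℝ)
    (Lf : EuclideanSpace ℝ (Fin d) → ℝ)
    (g : EuclideanSpace ℝ (Fin d) → EuclideanSpace ℝ (Fin d))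
    (L : ℝ) (hL : 0 ≤ L)
    (hgrad : ∀ x, HasGradientAt Lf (g x) x)
    (hLip : ∀ x y, ‖g x - g y‖ ≤ L * ‖x - y‖)
    (M : Matrix (Fin d) (Fin d) ℝ)
    (hMF : frobNorm (M - 1) ^ 2 ≤ 2 * ((d : ℝ) + s))
    (μs : ℝ) (hμ : 0 < μs)
    (θ gθ gMθ : EuclideanSpace ℝ (Fin d))
    (hGμ : HasGradientAt (fun θ' => ∫ u, Lf (θ' + μs • u) ∂(stdGaussianE d)) gθ θ)
    (hGμM : HasGradientAt
      (fun θ' => ∫ u, Lf (θ' + μs • mulVecE M u) ∂(stdGaussianE d)) gMθ θ) :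
    ‖gMθ - gθ‖ ≤ μs * L * Real.sqrt (2 * ((d : ℝ) + s)) ∧
    (inner ℝ gθ gMθ : ℝ)
      ≥ ‖gθ‖ ^ 2 - μs * L * Real.sqrt (2 * ((d : ℝ) + s)) * ‖gθ‖ := by
  have hgrad' : ∀ x y, ‖InnerProductSpace.toDual ℝ _ (g x) - InnerProductSpace.toDual ℝ _ (g y)‖
      ≤ L * ‖x - y‖ := fun x y => by
    rw [← map_sub, LinearIsometryEquiv.norm_map]
    exact hLip x y
  have hdiff : ‖gMθ - gθ‖ ≤ L * ∫ u, ‖μs • mulVecE M u - μs • u‖ ∂stdGaussianE d := by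
    have h := norm_sub_le_of_hasFDerivAt_integral_shift hL (fun x => (hgrad x).hasFDerivAt)
      hgrad' ((memLp_mulVecE M).const_smul μs) (memLp_id_stdGaussianE.const_smul μs)
      hGμM.hasFDerivAt hGμ.hasFDerivAt
    rwa [← map_sub, LinearIsometryEquiv.norm_map] at h
  have hshift : ∀ u, μs • mulVecE M u - μs • u = μs • mulVecE (M - 1) u := fun u => by
    simp [mulVecE_eq_toEuclideanCLM, smul_sub]
  have hbound : ‖gMθ - gθ‖ ≤ μs * L * Real.sqrt (2 * ((d : ℝ) + s)) := by
    refine hdiff.trans ?_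
    simp_rw [hshift, norm_smul, integral_const_mul, Real.norm_of_nonneg hμ.le]
    calc L * (μs * ∫ u, ‖mulVecE (M - 1) u‖ ∂stdGaussianE d)
        ≤ L * (μs * Real.sqrt (2 * ((d : ℝ) + s))) := by
          gcongr
          exact (integral_norm_mulVecE_le _).trans (Real.le_sqrt_of_sq_le hMF)
      _ = μs * L * Real.sqrt (2 * ((d : ℝ) + s)) := by ring
  exact ⟨hbound, real_inner_ge_norm_sq_sub_of_norm_sub_le hbound⟩

/-- Alignment of smoothed gradients: if `L` has `L`-Lipschitz gradient and
`‖M − I‖_F² ≤ 2(d+s)`, then the gradients of the Gaussian-smoothed losses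
`L_μ(θ) = E[L(θ + μu)]` and `L_{μ,M}(θ) = E[L(θ + μMu)]` satisfy
`‖∇L_{μ,M}(θ) − ∇L_μ(θ)‖ ≤ μL√(2(d+s))`, hence
`⟨∇L_μ(θ), ∇L_{μ,M}(θ)⟩ ≥ ‖∇L_μ(θ)‖² − μL√(2(d+s))·‖∇L_μ(θ)‖`. -/
theorem alignment_smoothed_gradients
    (d : ℕ) (s : ℝ)
    (Lf : EuclideanSpace ℝ (Fin d) → ℝ)
    (g : EuclideanSpace ℝ (Fin d) → EuclideanSpace ℝ (Fin d))
    (L : ℝ) (hL : 0 ≤ L)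
    (hgrad : ∀ x, HasGradientAt Lf (g x) x)
    (hLip : ∀ x y, ‖g x - g y‖ ≤ L * ‖x - y‖)
    (M : Matrix (Fin d) (Fin d) ℝ) (hM : M.PosSemidef)
    (hMF : frobNorm (M - 1) ^ 2 ≤ 2 * ((d : ℝ) + s))
    (μs : ℝ) (hμ : 0 < μs)
    (θ gθ gMθ : EuclideanSpace ℝ (Fin d))
    (hGμ : HasGradientAt (fun θ' => ∫ u, Lf (θ' + μs • u) ∂(stdGaussianE d)) gθ θ)
    (hGμM : HasGradientAt
      (fun θ' => ∫ u, Lf (θ' + μs • mulVecE M u) ∂(stdGaussianE d)) gMθ θ) :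
    ‖gMθ - gθ‖ ≤ μs * L * Real.sqrt (2 * ((d : ℝ) + s)) ∧
    (inner ℝ gθ gMθ : ℝ)
      ≥ ‖gθ‖ ^ 2 - μs * L * Real.sqrt (2 * ((d : ℝ) + s)) * ‖gθ‖ :=
  alignment_smoothed_gradients_general d s Lf g L hL hgrad hLip M hMF μs hμ θ gθ gMθ hGμ hGμM
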